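/- arXiv:1504.04599 — 2 statements merged into one kernel-verified Lean document; each statement's English description precedes it below -/
import Mathlib

section
/- Let X ~ Poisson(m₁ p) and Y ~ Poisson(m₂ q) be independent and define Z = ((m₂X - m₁Y)² - (m₂²X + m₁²Y))/(X + Y) with the convention Z = 0 when X + Y = 0. Then E[Z] = m₁² m₂² · ((q-p)²/z) · (1 - (1 - e^{-z})/z), where z = m₁p + m₂q > 0. In particular E[Z] = 0 when p = q. -/
open scoped BigOperators
open Real

/-- Poisson pmf with rate `lam` at `k`. -/
noncomputable def pp (lam : ℝ) (k : ℕ) : ℝ := Real.exp (-lam) * lam ^ k / (Nat.factorial k)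

/-!
The numerator of `Z` is `m₂²X(X-1) + m₁²Y(Y-1) - 2m₁m₂XY`, a combination of factorial moments.
Grouping the double series along the antidiagonals `X + Y = n + 2`, the identity
`pp c (k + 1) * (k + 1) = c * pp c k` together with the Poisson convolution collapses each
antidiagonal to `(m₂c - m₁d)² pp (c + d) n`, so `E Z = (m₂c - m₁d)² E[1/(N + 2)]` with
`N ~ Poisson(z)`, `z = c + d`. Finally `z² pp z n / (n + 2) = (n + 1) pp z (n + 2)`, whence
`z² E[1/(N + 2)] = E[(N - 1)⁺] = z - 1 + e^{-z}`.
-/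

open Finset

theorem HasSum.sum_antidiagonal {α : Type*} [AddCommMonoid α] [TopologicalSpace α]
    [ContinuousAdd α] [RegularSpace α] {f : ℕ × ℕ → α} {a : α} (h : HasSum f a) :
    HasSum (fun n ↦ ∑ p ∈ antidiagonal n, f p) a :=
  (HasAntidiagonal.sigmaAntidiagonalEquivProd.hasSum_iff.mpr h).sigma
    fun n ↦ (antidiagonal n).hasSum f

theorem pp_succ_mul (c : ℝ) (k : ℕ) : pp c (k + 1) * (k + 1) = c * pp c k := by
  rw [pp, pp, Nat.factorial_succ]
  push_cast
  field_simp
  ring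

theorem hasSum_pp (c : ℝ) : HasSum (pp c) 1 := by
  have h := (NormedSpace.expSeries_div_hasSum_exp c).mul_left (exp (-c))
  rw [← exp_eq_exp_ℝ, ← exp_add, neg_add_cancel, exp_zero] at h
  exact h.congr_fun fun k ↦ mul_div_assoc _ _ _

theorem hasSum_pp_mul (c : ℝ) : HasSum (fun k ↦ pp c k * k) c := by
  rw [← hasSum_nat_add_iff' 1]
  simpa [pp_succ_mul] using (hasSum_pp c).mul_left c

section Antidiagonal

variable (c d : ℝ)

theorem sum_antidiagonal_succ_fst_mul (f : ℕ × ℕ → ℝ) (n : ℕ) :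
    ∑ p ∈ antidiagonal (n + 1), p.1 * f p * (pp c p.1 * pp d p.2) =
      c * ∑ p ∈ antidiagonal n, f (p.1 + 1, p.2) * (pp c p.1 * pp d p.2) := by
  rw [Nat.sum_antidiagonal_succ, mul_sum, Nat.cast_zero, zero_mul, zero_mul, zero_add]
  refine sum_congr rfl fun p _ ↦ ?_
  push_cast
  linear_combination f (p.1 + 1, p.2) * pp d p.2 * pp_succ_mul c p.1

theorem sum_antidiagonal_succ_snd_mul (f : ℕ × ℕ → ℝ) (n : ℕ) :
    ∑ p ∈ antidiagonal (n + 1), p.2 * f p * (pp c p.1 * pp d p.2) =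
      d * ∑ p ∈ antidiagonal n, f (p.1, p.2 + 1) * (pp c p.1 * pp d p.2) := by
  rw [Nat.sum_antidiagonal_succ', mul_sum, Nat.cast_zero, zero_mul, zero_mul, zero_add]
  refine sum_congr rfl fun p _ ↦ ?_
  push_cast
  linear_combination f (p.1, p.2 + 1) * pp c p.1 * pp_succ_mul d p.2

theorem sum_antidiagonal_pp_mul_pp (n : ℕ) :
    ∑ p ∈ antidiagonal n, pp c p.1 * pp d p.2 = pp (c + d) n := by
  induction n with
  | zero => simp [pp, ← exp_add, add_comm]
  | succ n ih =>
    have hweight : ((n : ℝ) + 1) * ∑ p ∈ antidiagonal (n + 1), pp c p.1 * pp d p.2 =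
        ∑ p ∈ antidiagonal (n + 1), p.1 * 1 * (pp c p.1 * pp d p.2) +
          ∑ p ∈ antidiagonal (n + 1), p.2 * 1 * (pp c p.1 * pp d p.2) := by
      rw [mul_sum, ← sum_add_distrib]
      refine sum_congr rfl fun p hp ↦ ?_
      have hsum : (p.1 : ℝ) + p.2 = n + 1 := by exact_mod_cast mem_antidiagonal.mp hp
      rw [← hsum]
      ring
    rw [sum_antidiagonal_succ_fst_mul, sum_antidiagonal_succ_snd_mul] at hweight
    simp only [one_mul, ih] at hweight
    refine mul_left_cancel₀ (by positivity : (n : ℝ) + 1 ≠ 0) ?_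
    linear_combination hweight - pp_succ_mul (c + d) n

theorem sum_antidiagonal_fst_mul_fst_sub_one (n : ℕ) :
    ∑ p ∈ antidiagonal (n + 2), p.1 * (p.1 - 1 : ℝ) * (pp c p.1 * pp d p.2) =
      c ^ 2 * pp (c + d) n := by
  rw [sum_antidiagonal_succ_fst_mul]
  simpa [pow_two, mul_assoc, sum_antidiagonal_pp_mul_pp] using
    congrArg (c * ·) (sum_antidiagonal_succ_fst_mul c d 1 n)

theorem sum_antidiagonal_snd_mul_snd_sub_one (n : ℕ) :
    ∑ p ∈ antidiagonal (n + 2), p.2 * (p.2 - 1 : ℝ) * (pp c p.1 * pp d p.2) =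
      d ^ 2 * pp (c + d) n := by
  rw [sum_antidiagonal_succ_snd_mul]
  simpa [pow_two, mul_assoc, sum_antidiagonal_pp_mul_pp] using
    congrArg (d * ·) (sum_antidiagonal_succ_snd_mul c d 1 n)

theorem sum_antidiagonal_fst_mul_snd (n : ℕ) :
    ∑ p ∈ antidiagonal (n + 2), p.1 * (p.2 : ℝ) * (pp c p.1 * pp d p.2) =
      c * d * pp (c + d) n := by
  rw [sum_antidiagonal_succ_fst_mul]
  simpa [mul_assoc, sum_antidiagonal_pp_mul_pp] using
    congrArg (c * ·) (sum_antidiagonal_succ_snd_mul c d 1 n)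

end Antidiagonal

theorem hasSum_pp_div_add_two {z : ℝ} (hz : z ≠ 0) :
    HasSum (fun n : ℕ ↦ pp z n / (n + 2)) ((z - 1 + exp (-z)) / z ^ 2) := by
  have hpred : HasSum (fun n : ℕ ↦ pp z n * ((n : ℝ) - 1)) (z - 1) := by
    simpa only [mul_sub, mul_one] using (hasSum_pp_mul z).sub (hasSum_pp z)
  have hshift : HasSum (fun n : ℕ ↦ pp z (n + 2) * ((n : ℝ) + 1)) (z - 1 + exp (-z)) := by
    rw [← hasSum_nat_add_iff' 2] at hpred
    have hhead : ∑ i ∈ range 2, pp z i * ((i : ℝ) - 1) = -exp (-z) := by simp [sum_range_succ, pp]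
    rw [hhead, sub_neg_eq_add] at hpred
    refine hpred.congr_fun fun n ↦ ?_
    push_cast
    ring
  refine (hshift.div_const (z ^ 2)).congr_fun fun n ↦ ?_
  have h₁ := pp_succ_mul z n
  have h₂ := pp_succ_mul z (n + 1)
  push_cast at h₂
  field_simp
  linear_combination (-(n : ℝ) - 1) * h₂ - z * h₁

noncomputable def twoSampleStat (m₁ m₂ : ℝ) (k l : ℕ) : ℝ :=
  if k + l = 0 then 0 else
    ((m₂ * k - m₁ * l) ^ 2 - (m₂ ^ 2 * k + m₁ ^ 2 * l)) / ((k : ℝ) + l)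

section TwoSampleStat

variable (m₁ m₂ : ℝ)

-- At `k = l = 0` the right-hand side is `0 / 0 = 0`, matching the `if` branch.
theorem twoSampleStat_eq_div (k l : ℕ) :
    twoSampleStat m₁ m₂ k l =
      (m₂ ^ 2 * (k * (k - 1 : ℝ)) + m₁ ^ 2 * (l * (l - 1 : ℝ)) - 2 * m₁ * m₂ * (k * l)) /
        ((k : ℝ) + l) := by
  rw [twoSampleStat]
  split_ifs with h
  · simp [Nat.add_eq_zero_iff.mp h]
  · ring_nf

theorem abs_twoSampleStat_le (k l : ℕ) :
    |twoSampleStat m₁ m₂ k l| ≤ 2 * (m₁ ^ 2 + m₂ ^ 2) * ((k : ℝ) + l) := by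
  rw [twoSampleStat]
  split_ifs with h
  · rw [abs_zero]
    positivity
  have hs : (1 : ℝ) ≤ k + l := by exact_mod_cast Nat.one_le_iff_ne_zero.mpr h
  have hk : (0 : ℝ) ≤ k := k.cast_nonneg
  have hl : (0 : ℝ) ≤ l := l.cast_nonneg
  have hpos : (0 : ℝ) < k + l := by linarith
  rw [abs_div, abs_of_pos hpos, div_le_iff₀ hpos, abs_le]
  have hk2 : (k : ℝ) ≤ (k + l) * (k + l) := by nlinarith
  have hl2 : (l : ℝ) ≤ (k + l) * (k + l) := by nlinarith
  constructor
  · nlinarith [sq_nonneg (m₂ * k - m₁ * l), mul_le_mul_of_nonneg_left hk2 (sq_nonneg m₂),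
      mul_le_mul_of_nonneg_left hl2 (sq_nonneg m₁), sq_nonneg m₁, sq_nonneg m₂]
  · nlinarith [sq_nonneg (m₂ * k + m₁ * l), mul_nonneg (sq_nonneg m₁) hl,
      mul_nonneg (sq_nonneg m₂) hk,
      mul_nonneg (sq_nonneg m₂) (mul_nonneg hl (by linarith : (0 : ℝ) ≤ 2 * k + l)),
      mul_nonneg (sq_nonneg m₁) (mul_nonneg hk (by linarith : (0 : ℝ) ≤ k + 2 * l))]

theorem sum_antidiagonal_pp_mul_pp_mul_twoSampleStat (c d : ℝ) (n : ℕ) :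
    ∑ p ∈ antidiagonal (n + 2), pp c p.1 * pp d p.2 * twoSampleStat m₁ m₂ p.1 p.2 =
      (m₂ * c - m₁ * d) ^ 2 * (pp (c + d) n / (n + 2)) := by
  calc ∑ p ∈ antidiagonal (n + 2), pp c p.1 * pp d p.2 * twoSampleStat m₁ m₂ p.1 p.2
      = (m₂ ^ 2 * ∑ p ∈ antidiagonal (n + 2), p.1 * (p.1 - 1 : ℝ) * (pp c p.1 * pp d p.2) +
          m₁ ^ 2 * ∑ p ∈ antidiagonal (n + 2), p.2 * (p.2 - 1 : ℝ) * (pp c p.1 * pp d p.2) -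
          2 * m₁ * m₂ * ∑ p ∈ antidiagonal (n + 2), p.1 * (p.2 : ℝ) * (pp c p.1 * pp d p.2)) /
            (n + 2) := by
        simp only [mul_sum, ← sum_add_distrib, ← sum_sub_distrib, sum_div]
        refine sum_congr rfl fun p hp ↦ ?_
        have hsum : (p.1 : ℝ) + p.2 = n + 2 := by exact_mod_cast mem_antidiagonal.mp hp
        rw [twoSampleStat_eq_div, hsum]
        ring
    _ = (m₂ * c - m₁ * d) ^ 2 * (pp (c + d) n / (n + 2)) := by
        rw [sum_antidiagonal_fst_mul_fst_sub_one, sum_antidiagonal_snd_mul_snd_sub_one,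
          sum_antidiagonal_fst_mul_snd]
        ring

theorem summable_pp_mul_pp_mul_twoSampleStat (c d : ℝ) :
    Summable fun p : ℕ × ℕ ↦ pp c p.1 * pp d p.2 * twoSampleStat m₁ m₂ p.1 p.2 := by
  have hfst := (hasSum_pp_mul c).summable.norm.mul_norm (hasSum_pp d).summable.norm
  have hsnd := (hasSum_pp c).summable.norm.mul_norm (hasSum_pp_mul d).summable.norm
  refine Summable.of_norm_bounded ((hfst.add hsnd).mul_left (2 * (m₁ ^ 2 + m₂ ^ 2))) ?_
  rintro ⟨k, l⟩
  simp only [norm_mul, Real.norm_eq_abs, Nat.abs_cast]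
  calc |pp c k| * |pp d l| * |twoSampleStat m₁ m₂ k l|
      ≤ |pp c k| * |pp d l| * (2 * (m₁ ^ 2 + m₂ ^ 2) * ((k : ℝ) + l)) := by
        gcongr
        exact abs_twoSampleStat_le m₁ m₂ k l
    _ = _ := by ring

theorem hasSum_pp_mul_pp_mul_twoSampleStat {c d : ℝ} (hz : c + d ≠ 0) :
    HasSum (fun p : ℕ × ℕ ↦ pp c p.1 * pp d p.2 * twoSampleStat m₁ m₂ p.1 p.2)
      ((m₂ * c - m₁ * d) ^ 2 * (c + d - 1 + exp (-(c + d))) / (c + d) ^ 2) := by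
  have hF := summable_pp_mul_pp_mul_twoSampleStat m₁ m₂ c d
  have hrows := (hasSum_nat_add_iff' 2).mpr hF.hasSum.sum_antidiagonal
  have hhead : ∑ n ∈ range 2, ∑ p ∈ antidiagonal n,
      pp c p.1 * pp d p.2 * twoSampleStat m₁ m₂ p.1 p.2 = 0 := by
    simp [sum_range_succ, Nat.sum_antidiagonal_succ, twoSampleStat]
  simp only [hhead, sub_zero, sum_antidiagonal_pp_mul_pp_mul_twoSampleStat] at hrows
  have hval := (hasSum_pp_div_add_two hz).mul_left ((m₂ * c - m₁ * d) ^ 2)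
  rw [mul_div_assoc, ← hrows.unique hval]
  exact hF.hasSum

end TwoSampleStat

theorem tsum_tsum_pp_mul_pp_mul_twoSampleStat (m₁ m₂ : ℝ) {c d : ℝ} (hz : c + d ≠ 0) :
    ∑' k : ℕ, ∑' l : ℕ, pp c k * pp d l * twoSampleStat m₁ m₂ k l =
      (m₂ * c - m₁ * d) ^ 2 * (c + d - 1 + exp (-(c + d))) / (c + d) ^ 2 :=
  (summable_pp_mul_pp_mul_twoSampleStat m₁ m₂ c d).tsum_prod.symm.trans
    (hasSum_pp_mul_pp_mul_twoSampleStat m₁ m₂ hz).tsum_eq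

theorem stmt_7_general (m₁ m₂ p q : ℝ) (hz : 0 < m₁ * p + m₂ * q) :
    (∑' k : ℕ, ∑' l : ℕ, pp (m₁ * p) k * pp (m₂ * q) l *
        (if k + l = 0 then 0 else
          ((m₂ * k - m₁ * l) ^ 2 - (m₂ ^ 2 * k + m₁ ^ 2 * l)) / ((k : ℝ) + l))) =
      m₁ ^ 2 * m₂ ^ 2 * ((q - p) ^ 2 / (m₁ * p + m₂ * q)) *
        (1 - (1 - Real.exp (-(m₁ * p + m₂ * q))) / (m₁ * p + m₂ * q)) ∧
    (p = q →
      (∑' k : ℕ, ∑' l : ℕ, pp (m₁ * p) k * pp (m₂ * q) l *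
        (if k + l = 0 then 0 else
          ((m₂ * k - m₁ * l) ^ 2 - (m₂ ^ 2 * k + m₁ ^ 2 * l)) / ((k : ℝ) + l))) = 0) := by
  have key := tsum_tsum_pp_mul_pp_mul_twoSampleStat m₁ m₂ hz.ne'
  have hrhs : (m₂ * (m₁ * p) - m₁ * (m₂ * q)) ^ 2 *
        (m₁ * p + m₂ * q - 1 + exp (-(m₁ * p + m₂ * q))) / (m₁ * p + m₂ * q) ^ 2 =
      m₁ ^ 2 * m₂ ^ 2 * ((q - p) ^ 2 / (m₁ * p + m₂ * q)) *
        (1 - (1 - exp (-(m₁ * p + m₂ * q))) / (m₁ * p + m₂ * q)) := by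
    field_simp [hz.ne']
    ring
  unfold twoSampleStat at key
  rw [hrhs] at key
  exact ⟨key, fun hpq ↦ by rw [key, hpq]; simp⟩

theorem stmt_7 (m₁ m₂ p q : ℝ) (hm₁ : 0 < m₁) (hm₂ : 0 < m₂)
    (hp : 0 ≤ p) (hq : 0 ≤ q) (hz : 0 < m₁ * p + m₂ * q) :
    (∑' k : ℕ, ∑' l : ℕ, pp (m₁ * p) k * pp (m₂ * q) l *
        (if k + l = 0 then 0 else
          ((m₂ * k - m₁ * l) ^ 2 - (m₂ ^ 2 * k + m₁ ^ 2 * l)) / ((k : ℝ) + l))) =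
      m₁ ^ 2 * m₂ ^ 2 * ((q - p) ^ 2 / (m₁ * p + m₂ * q)) *
        (1 - (1 - Real.exp (-(m₁ * p + m₂ * q))) / (m₁ * p + m₂ * q)) ∧
    (p = q →
      (∑' k : ℕ, ∑' l : ℕ, pp (m₁ * p) k * pp (m₂ * q) l *
        (if k + l = 0 then 0 else
          ((m₂ * k - m₁ * l) ^ 2 - (m₂ ^ 2 * k + m₁ ^ 2 * l)) / ((k : ℝ) + l))) = 0) :=
  stmt_7_general m₁ m₂ p q hz
end

section
/- Let X ~ Poisson(m₁ p) and Y ~ Poisson(m₂ q) be independent and Z = ((m₂X - m₁Y)² - (m₂²X + m₁²Y))/(X + Y) (with Z = 0 when X + Y = 0). If p = q, then Var[Z] ≤ 2 m₁² m₂² · Pr[X + Y > 0]. -/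
open scoped BigOperators
open Real

/-!
Condition on `N = X + Y`. Given `N = n`, `X` is binomial with `n` trials and success probability
`m₁ / (m₁ + m₂)` because the two rates are proportional to `m₁` and `m₂`, and `Z` is the numerator
`W = (m₂ X - m₁ Y)² - (m₂² X + m₁² Y)` divided by `n`. Write `U = m₂ X - m₁ Y`. Moving one trial
from `Y` to `X` changes `U` by `m₂` and `W` by `2 m₂ U`; moving one from `X` to `Y` changes them by
`-m₁` and `-2 m₁ U`. Pascal's rule therefore gives recursions in `n`, in which the cross terms cancel
because the rates are proportional. Solving them gives `E[U² | N = n] = n m₁ m₂` and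
`E[W² | N = n] = 2 m₁² m₂² n (n - 1)`. Hence `E[Z² | N = n] ≤ 2 m₁² m₂²` for `n ≥ 1`, and
`Var Z ≤ E[Z²]`.
-/

open Finset

section Antidiagonal

variable {F G H : ℕ × ℕ → ℝ}

theorem tsum_sigmaAntidiagonalEquivProd_slice (n : ℕ) :
    ∑' y : antidiagonal n, H (HasAntidiagonal.sigmaAntidiagonalEquivProd ⟨n, y⟩) =
      ∑ x ∈ antidiagonal n, H x :=
  Finset.tsum_subtype _ H

theorem summable_sigmaAntidiagonalEquivProd (hH : Summable H) :
    Summable fun x => H (HasAntidiagonal.sigmaAntidiagonalEquivProd x) :=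
  HasAntidiagonal.sigmaAntidiagonalEquivProd.summable_iff.mpr hH

theorem Summable.sum_antidiagonal (hH : Summable H) :
    Summable fun n => ∑ x ∈ antidiagonal n, H x := by
  simpa only [tsum_sigmaAntidiagonalEquivProd_slice] using
    (summable_sigmaAntidiagonalEquivProd hH).sigma

theorem tsum_tsum_eq_tsum_sum_antidiagonal (hH : Summable H) :
    ∑' k, ∑' l, H (k, l) = ∑' n, ∑ x ∈ antidiagonal n, H x := by
  rw [← hH.tsum_prod, ← HasAntidiagonal.sigmaAntidiagonalEquivProd.tsum_eq H,
    (summable_sigmaAntidiagonalEquivProd hH).tsum_sigma]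
  simp only [tsum_sigmaAntidiagonalEquivProd_slice]

theorem summable_of_sum_antidiagonal_le (hF : ∀ x, 0 ≤ F x) (hG : Summable G)
    (h : ∀ n, ∑ x ∈ antidiagonal n, F x ≤ ∑ x ∈ antidiagonal n, G x) : Summable F := by
  rw [← HasAntidiagonal.sigmaAntidiagonalEquivProd.summable_iff, Function.comp_def,
    summable_sigma_of_nonneg fun _ => hF _]
  refine ⟨fun n => .of_finite, ?_⟩
  simp only [tsum_sigmaAntidiagonalEquivProd_slice]
  exact hG.sum_antidiagonal.of_nonneg_of_le (fun n => sum_nonneg fun x _ => hF x) h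

theorem tsum_tsum_le_of_sum_antidiagonal_le {c : ℝ} (hF : ∀ x, 0 ≤ F x) (hG : Summable G)
    (h : ∀ n, ∑ x ∈ antidiagonal n, F x ≤ c * ∑ x ∈ antidiagonal n, G x) :
    ∑' k, ∑' l, F (k, l) ≤ c * ∑' k, ∑' l, G (k, l) := by
  have hF' : Summable F :=
    summable_of_sum_antidiagonal_le hF (hG.mul_left c) (by simpa only [mul_sum] using h)
  rw [tsum_tsum_eq_tsum_sum_antidiagonal hF', tsum_tsum_eq_tsum_sum_antidiagonal hG,
    ← tsum_mul_left]
  exact hF'.sum_antidiagonal.tsum_le_tsum h (hG.sum_antidiagonal.mul_left c)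

end Antidiagonal

/-- `(a + b) ^ n` times the expectation of `f X (n - X)` for `X` binomial with `n` trials and
success probability `a / (a + b)`. -/
noncomputable def binomSum (a b : ℝ) (n : ℕ) (f : ℕ → ℕ → ℝ) : ℝ :=
  ∑ x ∈ antidiagonal n, (n.choose x.1 : ℝ) * a ^ x.1 * b ^ x.2 * f x.1 x.2

section BinomSum

variable {a b : ℝ} {n : ℕ} {f g : ℕ → ℕ → ℝ}

theorem binomSum_congr (h : ∀ k l, k + l = n → f k l = g k l) :
    binomSum a b n f = binomSum a b n g :=
  sum_congr rfl fun x hx => by rw [h x.1 x.2 (mem_antidiagonal.mp hx)]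

theorem binomSum_add :
    binomSum a b n (fun k l => f k l + g k l) = binomSum a b n f + binomSum a b n g := by
  simp only [binomSum, mul_add, sum_add_distrib]

theorem binomSum_const_mul (c : ℝ) :
    binomSum a b n (fun k l => c * f k l) = c * binomSum a b n f := by
  simp only [binomSum, mul_sum]
  exact sum_congr rfl fun _ _ => by ring

theorem binomSum_one : binomSum a b n (fun _ _ => 1) = (a + b) ^ n := by
  simp only [binomSum, mul_one, (Commute.all a b).add_pow', nsmul_eq_mul, mul_assoc]

theorem binomSum_succ :
    binomSum a b (n + 1) f = binomSum a b n (fun k l => a * f (k + 1) l + b * f k (l + 1)) := by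
  simp only [binomSum, mul_assoc,
    sum_antidiagonal_choose_succ_mul (fun i j => a ^ i * (b ^ j * f i j)) n,
    ← sum_add_distrib, mul_add]
  refine sum_congr rfl fun x hx => ?_
  rw [← Nat.choose_symm_of_eq_add (mem_antidiagonal.mp hx).symm]
  ring

theorem binomSum_succ_of_shift {c : ℝ}
    (h : ∀ k l, a * f (k + 1) l + b * f k (l + 1) = (a + b) * f k l + c * g k l) :
    binomSum a b (n + 1) f = (a + b) * binomSum a b n f + c * binomSum a b n g := by
  rw [binomSum_succ, binomSum_congr fun k l _ => h k l, binomSum_add, binomSum_const_mul,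
    binomSum_const_mul]

end BinomSum

noncomputable def zNumerator (m₁ m₂ x y : ℝ) : ℝ :=
  (m₂ * x - m₁ * y) ^ 2 - (m₂ ^ 2 * x + m₁ ^ 2 * y)

noncomputable def zStat (m₁ m₂ : ℝ) (k l : ℕ) : ℝ :=
  if k + l = 0 then 0 else zNumerator m₁ m₂ k l / ((k : ℝ) + l)

section Proportional

variable {m₁ m₂ a b : ℝ} (hab : a * m₂ = b * m₁)
include hab

theorem binomSum_mul_sub_mul_sq (n : ℕ) :
    binomSum a b n (fun k l => (m₂ * k - m₁ * l) ^ 2) = n * m₁ * m₂ * (a + b) ^ n := by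
  induction n with
  | zero => simp [binomSum]
  | succ n ih =>
    rw [binomSum_succ_of_shift (c := m₁ * m₂ * (a + b)) (g := fun _ _ => 1) fun k l => by
        push_cast
        linear_combination (2 * (m₂ * k - m₁ * l) + m₂ - m₁) * hab,
      ih, binomSum_one]
    push_cast
    ring

theorem binomSum_zNumerator_sq (n : ℕ) :
    binomSum a b n (fun k l => zNumerator m₁ m₂ k l ^ 2) =
      2 * m₁ ^ 2 * m₂ ^ 2 * n * (n - 1) * (a + b) ^ n := by
  induction n with
  | zero => simp [binomSum, zNumerator]
  | succ n ih =>
    rw [binomSum_succ_of_shift (c := 4 * m₁ * m₂ * (a + b))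
        (g := fun k l => (m₂ * k - m₁ * l) ^ 2) fun k l => by
        push_cast
        linear_combination (norm := (simp only [zNumerator]; ring)) (4 * zNumerator m₁ m₂ k l * (m₂ * k - m₁ * l) +
          4 * (m₂ - m₁) * (m₂ * k - m₁ * l) ^ 2) * hab,
      ih, binomSum_mul_sub_mul_sq hab]
    push_cast
    ring

theorem binomSum_zStat_sq_le (hab₀ : 0 ≤ a + b) (n : ℕ) :
    binomSum a b n (fun k l => zStat m₁ m₂ k l ^ 2) ≤
      2 * m₁ ^ 2 * m₂ ^ 2 * binomSum a b n (fun k l => if 0 < k + l then 1 else 0) := by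
  cases n with
  | zero => simp [binomSum, zStat]
  | succ n =>
    rw [binomSum_congr (g := fun k l => ((n + 1 : ℝ) ^ 2)⁻¹ * zNumerator m₁ m₂ k l ^ 2)
        fun k l hkl => by
          have hkl' : (k : ℝ) + l = n + 1 := by exact_mod_cast hkl
          rw [zStat, if_neg (by omega), hkl', div_pow, inv_mul_eq_div],
      binomSum_congr (g := fun _ _ => 1) fun k l hkl => if_pos (by omega),
      binomSum_const_mul, binomSum_zNumerator_sq hab, binomSum_one]
    have hC : 0 ≤ 2 * m₁ ^ 2 * m₂ ^ 2 * (a + b) ^ (n + 1) := by positivity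
    calc ((n + 1 : ℝ) ^ 2)⁻¹ * (2 * m₁ ^ 2 * m₂ ^ 2 * ↑(n + 1) * (↑(n + 1) - 1) * (a + b) ^ (n + 1))
        = 2 * m₁ ^ 2 * m₂ ^ 2 * (a + b) ^ (n + 1) * (n / (n + 1)) := by
          push_cast
          field_simp
          ring
      _ ≤ 2 * m₁ ^ 2 * m₂ ^ 2 * (a + b) ^ (n + 1) :=
          mul_le_of_le_one_right hC (div_le_one_of_le₀ (by linarith) (by positivity))

end Proportional

section Poisson

theorem pp_nonneg {lam : ℝ} (h : 0 ≤ lam) (k : ℕ) : 0 ≤ pp lam k := by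
  unfold pp
  positivity

theorem summable_pp (lam : ℝ) : Summable (pp lam) := by
  refine ((Real.summable_pow_div_factorial lam).mul_left (exp (-lam))).congr fun k => ?_
  rw [pp, mul_div_assoc]

theorem pp_mul_pp (a b : ℝ) (k l : ℕ) :
    pp a k * pp b l = exp (-(a + b)) / (k + l).factorial * ((k + l).choose k * a ^ k * b ^ l) := by
  have hfac : ((k + l).choose k * k.factorial * l.factorial : ℝ) = (k + l).factorial := by
    exact_mod_cast Nat.choose_symm_add ▸ Nat.add_choose_mul_factorial_mul_factorial k l
  have hchoose : ((k + l).choose k : ℝ) ≠ 0 := by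
    exact_mod_cast (Nat.choose_pos (Nat.le_add_right k l)).ne'
  rw [← hfac, neg_add, exp_add]
  unfold pp
  field_simp

theorem sum_antidiagonal_pp_mul_pp_mul (a b : ℝ) (n : ℕ) (f : ℕ → ℕ → ℝ) :
    ∑ x ∈ antidiagonal n, pp a x.1 * pp b x.2 * f x.1 x.2 =
      exp (-(a + b)) / n.factorial * binomSum a b n f := by
  rw [binomSum, mul_sum]
  refine sum_congr rfl fun x hx => ?_
  rw [pp_mul_pp, mem_antidiagonal.mp hx]
  ring

variable {a b : ℝ} (ha : 0 ≤ a) (hb : 0 ≤ b)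
include ha hb

theorem summable_pp_mul_pp_mul {C : ℝ} {f : ℕ → ℕ → ℝ} (hf : ∀ k l, |f k l| ≤ C) :
    Summable fun x : ℕ × ℕ => pp a x.1 * pp b x.2 * f x.1 x.2 := by
  have hpp₀ (x : ℕ × ℕ) : 0 ≤ pp a x.1 * pp b x.2 := mul_nonneg (pp_nonneg ha _) (pp_nonneg hb _)
  have hpp := (summable_pp a).mul_of_nonneg (summable_pp b) (pp_nonneg ha) (pp_nonneg hb)
  refine hpp.mul_right C |>.of_norm_bounded fun x => ?_
  rw [Real.norm_eq_abs, abs_mul, abs_of_nonneg (hpp₀ x)]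
  exact mul_le_mul_of_nonneg_left (hf _ _) (hpp₀ x)

theorem tsum_pp_mul_pp_mul_le_of_binomSum_le {c C : ℝ} {f g : ℕ → ℕ → ℝ}
    (hf : ∀ k l, 0 ≤ f k l) (hg : ∀ k l, |g k l| ≤ C)
    (h : ∀ n, binomSum a b n f ≤ c * binomSum a b n g) :
    ∑' k, ∑' l, pp a k * pp b l * f k l ≤ c * ∑' k, ∑' l, pp a k * pp b l * g k l := by
  refine tsum_tsum_le_of_sum_antidiagonal_le
    (fun x => mul_nonneg (mul_nonneg (pp_nonneg ha x.1) (pp_nonneg hb x.2)) (hf x.1 x.2))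
    (summable_pp_mul_pp_mul ha hb hg) fun n => ?_
  rw [sum_antidiagonal_pp_mul_pp_mul, sum_antidiagonal_pp_mul_pp_mul, mul_left_comm]
  exact mul_le_mul_of_nonneg_left (h n) (by positivity)

end Poisson

theorem stmt_10 (m₁ m₂ p q : ℝ) (hm₁ : 0 < m₁) (hm₂ : 0 < m₂)
    (hp : 0 ≤ p) (hpq : p = q) :
    (∑' k : ℕ, ∑' l : ℕ, pp (m₁ * p) k * pp (m₂ * q) l *
        (if k + l = 0 then 0 else
          ((m₂ * k - m₁ * l) ^ 2 - (m₂ ^ 2 * k + m₁ ^ 2 * l)) / ((k : ℝ) + l)) ^ 2) -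
      (∑' k : ℕ, ∑' l : ℕ, pp (m₁ * p) k * pp (m₂ * q) l *
        (if k + l = 0 then 0 else
          ((m₂ * k - m₁ * l) ^ 2 - (m₂ ^ 2 * k + m₁ ^ 2 * l)) / ((k : ℝ) + l))) ^ 2 ≤
    2 * m₁ ^ 2 * m₂ ^ 2 *
      (∑' k : ℕ, ∑' l : ℕ, pp (m₁ * p) k * pp (m₂ * q) l *
        (if 0 < k + l then (1 : ℝ) else 0)) := by
  subst hpq
  have ha : 0 ≤ m₁ * p := by positivity
  have hb : 0 ≤ m₂ * p := by positivity
  refine (sub_le_self _ (sq_nonneg _)).trans <|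
    tsum_pp_mul_pp_mul_le_of_binomSum_le ha hb (C := 1) (fun _ _ => sq_nonneg _)
      (fun _ _ => by split_ifs <;> norm_num) (binomSum_zStat_sq_le (by ring) (by positivity))
end
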